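/- arXiv:math/0703176 — 3 statements merged into one kernel-verified Lean document; each statement's English description precedes it below -/
import Mathlib

section
/- Suppose all periodic orbits of f₀ are hyperbolic except at most one, that x₀ is a repelling fixed point of f₀ with f₀'(x₀) < −1, and that y lies on a homoclinic orbit (z_{−k}) to x₀ (y = z_{−K} for some K ≥ 1) which contains at most one critical point of f₀. Then y lies in the closure of the set of hyperbolic periodic points of f₀; consequently (y, λ₀) is not a chain explosion point. -/
open Set Metric Filter Function Topology

/-- An `ε`-chain (of length at least one) from `x` to `y` for the map `g`:
a finite sequence `z 0 = x, …, z N = y` with `|g (z (n-1)) - z n| < ε` for `1 ≤ n ≤ N`. -/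
def EpsChain (g : ℝ → ℝ) (ε x y : ℝ) : Prop :=
  ∃ N : ℕ, 1 ≤ N ∧ ∃ zc : ℕ → ℝ, zc 0 = x ∧ zc N = y ∧
    ∀ n : ℕ, 1 ≤ n → n ≤ N → |g (zc (n - 1)) - zc n| < ε

/-- `x` is chain recurrent for `g` if for every `ε > 0` there is an `ε`-chain from `x` to itself. -/
def ChainRecurrent (g : ℝ → ℝ) (x : ℝ) : Prop :=
  ∀ ε : ℝ, 0 < ε → EpsChain g ε x x

/-- `(x, lam0)` is a chain explosion point for the family `f` with parameters ranging in `J`: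
`x` is chain recurrent for `f lam0` and there is a neighborhood (a ball) of `x` such that,
on one side of `lam0`, no point of the neighborhood is chain recurrent for `f lam`. -/
def ChainExplosionPoint (f : ℝ → ℝ → ℝ) (J : Set ℝ) (lam0 x : ℝ) : Prop :=
  ChainRecurrent (f lam0) x ∧
  ∃ δ : ℝ, 0 < δ ∧
    ((∀ lam ∈ J, lam < lam0 → ∀ y ∈ Metric.ball x δ, ¬ ChainRecurrent (f lam) y) ∨
     (∀ lam ∈ J, lam0 < lam → ∀ y ∈ Metric.ball x δ, ¬ ChainRecurrent (f lam) y))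

/-- `p` is a periodic point of `g`. -/
def IsPeriodic (g : ℝ → ℝ) (p : ℝ) : Prop := ∃ n : ℕ, 1 ≤ n ∧ g^[n] p = p

/-- The forward orbit of `p` under `g`. -/
def Orbit (g : ℝ → ℝ) (p : ℝ) : Set ℝ := {x | ∃ m : ℕ, g^[m] p = x}

/-- A periodic point `p` of least period `n` is hyperbolic if `|(gⁿ)'(p)| ≠ 1`. -/
def IsHyperbolicPeriodic (g : ℝ → ℝ) (p : ℝ) : Prop :=
  IsPeriodic g p ∧ |deriv (g^[Function.minimalPeriod g p]) p| ≠ 1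

/-- A periodic point `p` of least period `n` is repelling if `|(gⁿ)'(p)| > 1`. -/
def IsRepellingPeriodic (g : ℝ → ℝ) (p : ℝ) : Prop :=
  IsPeriodic g p ∧ 1 < |deriv (g^[Function.minimalPeriod g p]) p|

/-- The unstable manifold of a (repelling) periodic point `q` of `g`: points admitting a
backward orbit whose distance to the orbit of `q` tends to `0`. -/
def UnstableManifold (g : ℝ → ℝ) (q : ℝ) : Set ℝ :=
  {x | ∃ bo : ℕ → ℝ, bo 0 = x ∧ (∀ k : ℕ, g (bo (k + 1)) = bo k) ∧
    Filter.Tendsto (fun k => Metric.infDist (bo k) (Orbit g q)) Filter.atTop (nhds 0)}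

/-- `cp` is a homoclinic tangency of `g` to a periodic orbit: a critical point lying in the
unstable manifold of a repelling periodic point `q`, some forward iterate of which equals `q`. -/
def IsHomoclinicTangencyPt (g : ℝ → ℝ) (cp : ℝ) : Prop :=
  ∃ q : ℝ, IsRepellingPeriodic g q ∧ deriv g cp = 0 ∧ cp ∈ UnstableManifold g q ∧
    ∃ m : ℕ, 1 ≤ m ∧ g^[m] cp = q

/-- `g` has a homoclinic tangency to a periodic orbit. -/
def HasHomoclinicTangency (g : ℝ → ℝ) : Prop := ∃ cp : ℝ, IsHomoclinicTangencyPt g cp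

/-- `g` has a non-hyperbolic periodic orbit. -/
def HasNonHypPeriodicOrbit (g : ℝ → ℝ) : Prop :=
  ∃ p : ℝ, IsPeriodic g p ∧ ¬ IsHyperbolicPeriodic g p

/-- `g` has at most one non-hyperbolic periodic orbit. -/
def AtMostOneNonHypOrbit (g : ℝ → ℝ) : Prop :=
  ∀ p q : ℝ, IsPeriodic g p → ¬ IsHyperbolicPeriodic g p →
    IsPeriodic g q → ¬ IsHyperbolicPeriodic g q → Orbit g p = Orbit g q

/-- `g` has at most one homoclinic tangency to a periodic orbit. -/
def AtMostOneTangency (g : ℝ → ℝ) : Prop :=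
  ∀ cp cq : ℝ, IsHomoclinicTangencyPt g cp → IsHomoclinicTangencyPt g cq → cp = cq

/-- Genericity: at most one non-hyperbolic periodic orbit, at most one homoclinic tangency
to a periodic orbit, and not both. -/
def GenericAt (g : ℝ → ℝ) : Prop :=
  AtMostOneNonHypOrbit g ∧ AtMostOneTangency g ∧
    ¬ (HasNonHypPeriodicOrbit g ∧ HasHomoclinicTangency g)

/-- Every periodic orbit of `g` is hyperbolic. -/
def AllPeriodicHyperbolic (g : ℝ → ℝ) : Prop :=
  ∀ p : ℝ, IsPeriodic g p → IsHyperbolicPeriodic g p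

/-- `x0` is a repelling fixed point of `g`. -/
def RepellingFixedPt (g : ℝ → ℝ) (x0 : ℝ) : Prop := g x0 = x0 ∧ 1 < |deriv g x0|

/-- A homoclinic orbit `(z k)ₖ = (z₋ₖ)ₖ` to the repelling fixed point `x0` of `g`. -/
def IsHomoclinicOrbit (g : ℝ → ℝ) (x0 : ℝ) (z : ℕ → ℝ) : Prop :=
  z 0 = x0 ∧ (∀ k : ℕ, g (z (k + 1)) = z k) ∧ (∃ K : ℕ, 1 ≤ K ∧ z K ≠ x0) ∧
    Filter.Tendsto z Filter.atTop (nhds x0)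

/-- `δ > 0` is small enough that `g` is increasing on `[x0 - δ, x0 + δ]` with `g x < x` on
`[x0 - δ, x0)` and `g x > x` on `(x0, x0 + δ]`. -/
def GoodDelta (g : ℝ → ℝ) (x0 δ : ℝ) : Prop :=
  0 < δ ∧ StrictMonoOn g (Set.Icc (x0 - δ) (x0 + δ)) ∧
    (∀ x : ℝ, x0 - δ ≤ x → x < x0 → g x < x) ∧
    (∀ x : ℝ, x0 < x → x ≤ x0 + δ → x < g x)

/-- The right branch of the unstable manifold of `x0`. -/
def URight (g : ℝ → ℝ) (x0 δ : ℝ) : Set ℝ := ⋃ n : ℕ, g^[n] '' Set.Icc x0 (x0 + δ)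

/-- The left branch of the unstable manifold of `x0`. -/
def ULeft (g : ℝ → ℝ) (x0 δ : ℝ) : Set ℝ := ⋃ n : ℕ, g^[n] '' Set.Icc (x0 - δ) x0

/-- The homoclinic orbit `z` to `x0`, with tangency point `w = z L`, is a crossing orbit:
either `z k < x0` for all large `k` and `h = g^[L-1]` lies (locally) above `h w` near `w`, or
`z k > x0` for all large `k` and `h` lies (locally) below `h w` near `w`. -/
def CrossingOrbit (g : ℝ → ℝ) (x0 : ℝ) (z : ℕ → ℝ) (L : ℕ) : Prop :=
  ((∃ k0 : ℕ, ∀ k : ℕ, k0 ≤ k → z k < x0) ∧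
    ∀ᶠ x in nhds (z L), g^[L - 1] (z L) ≤ g^[L - 1] x) ∨
  ((∃ k0 : ℕ, ∀ k : ℕ, k0 ≤ k → x0 < z k) ∧
    ∀ᶠ x in nhds (z L), g^[L - 1] x ≤ g^[L - 1] (z L))

/-- The ω-limit set of a set `A` under `g`: `⋂_N closure (⋃_{n ≥ N} g^[n] '' A)`. -/
def omegaSet (g : ℝ → ℝ) (A : Set ℝ) : Set ℝ :=
  ⋂ N : ℕ, closure (⋃ n : ℕ, ⋃ _ : N ≤ n, g^[n] '' A)

/-- `⋂_{ε > 0} ω(B_ε(z))`, where `B_ε(z)` is the open `ε`-ball about `z` in `I`. -/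
def OmegaBall (g : ℝ → ℝ) (I : Set ℝ) (z : ℝ) : Set ℝ :=
  ⋂ ε : ℝ, ⋂ _ : (0 : ℝ) < ε, omegaSet g (Metric.ball z ε ∩ I)

/-- `y ∈ ⋂_{ε>0} ω(B_ε(z))` is a barricade for `z` if `⋂_{ε>0} ω(B_ε(y))` is not contained
in `⋂_{ε>0} ω(B_ε(z))`. -/
def Barricade (g : ℝ → ℝ) (I : Set ℝ) (z y : ℝ) : Prop :=
  y ∈ OmegaBall g I z ∧ ¬ OmegaBall g I y ⊆ OmegaBall g I z

/-- `M = Is 0 ∪ ⋯ ∪ Is (n-1)` is an `n`-cycle of closed intervals with pairwise disjoint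
interiors, permuted cyclically by `g`. -/
def IsCycleOfIntervals (g : ℝ → ℝ) (Is : ℕ → Set ℝ) (n : ℕ) (M : Set ℝ) : Prop :=
  1 ≤ n ∧
  (∀ k : ℕ, k < n → ∃ u v : ℝ, u ≤ v ∧ Is k = Set.Icc u v) ∧
  (∀ k : ℕ, k < n → ∀ l : ℕ, l < n → k ≠ l → interior (Is k) ∩ interior (Is l) = ∅) ∧
  (∀ k : ℕ, k < n → g '' Is k = Is ((k + 1) % n)) ∧
  M = ⋃ k ∈ Finset.range n, Is k

/-- `B(M, g)`: points of `M` all of whose relatively open neighborhoods in `M` have forward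
orbit with closure equal to `M`. (If infinite, this is a basic set.) -/
def BSet (g : ℝ → ℝ) (M : Set ℝ) : Set ℝ :=
  {x ∈ M | ∀ U : Set ℝ, IsOpen U → x ∈ U → closure (⋃ m : ℕ, g^[m] '' (U ∩ M)) = M}

/-!
Near `x₀` the map `f lam0` reverses orientation and expands, so it maps a segment ending at
`x₀` onto a longer segment on the other side of `x₀`. A small ball `Z` about a point `z k` of
the homoclinic orbit close to `x₀` is mapped by `(f lam0)^[k]` onto a non-degenerate segment
ending at `x₀`; iterating, the segments grow and switch sides until an iterate of `Z` covers
`Z` with a margin at both ends. Such a covering survives perturbation of the parameter and gives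
a periodic point in `Z`, which `(f lam)^[k - K]` carries close to `y`. At `lam0` these periodic
points accumulate at `y`; the non-hyperbolic ones form at most one finite orbit, and `y` is not
periodic unless `y = x₀`. On both sides of `lam0` periodic, hence chain recurrent, points come
arbitrarily close to `y`, so there is no explosion.
-/

theorem IsPeriodic.apply_iterate {g : ℝ → ℝ} {p : ℝ} (h : IsPeriodic g p) (m : ℕ) :
    IsPeriodic g (g^[m] p) :=
  let ⟨n, hn, hp⟩ := h
  ⟨n, hn, IsPeriodicPt.apply_iterate hp m⟩

theorem IsPeriodic.chainRecurrent {g : ℝ → ℝ} {p : ℝ} (h : IsPeriodic g p) :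
    ChainRecurrent g p := by
  obtain ⟨n, hn, hp⟩ := h
  intro ε hε
  refine ⟨n, hn, fun i => g^[i] p, rfl, hp, fun i hi _ => ?_⟩
  obtain ⟨j, rfl⟩ := Nat.exists_eq_add_of_le' hi
  simpa [iterate_succ_apply'] using hε

theorem IsPeriodic.orbit_finite {g : ℝ → ℝ} {p : ℝ} (h : IsPeriodic g p) :
    (Orbit g p).Finite := by
  obtain ⟨n, hn, hp⟩ := h
  refine (Set.finite_range fun i : Fin n => g^[i] p).subset ?_
  rintro _ ⟨m, rfl⟩
  exact ⟨⟨m % n, Nat.mod_lt m hn⟩, IsPeriodicPt.iterate_mod_apply hp m⟩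

theorem IsPeriodic.eq_of_iterate_eq {g : ℝ → ℝ} {y x₀ : ℝ} (hy : IsPeriodic g y)
    (hx₀ : IsFixedPt g x₀) {K : ℕ} (hK : g^[K] y = x₀) : y = x₀ := by
  obtain ⟨n, hn, hyn⟩ := hy
  exact IsPeriodicPt.eq_of_apply_eq_same (IsPeriodicPt.iterate hyn K)
    ((hx₀.isPeriodicPt n).iterate K) hn (hK.trans (hx₀.iterate K).symm)

theorem IsFixedPt.isHyperbolicPeriodic {g : ℝ → ℝ} {x₀ : ℝ} (hfix : IsFixedPt g x₀)
    (hder : |deriv g x₀| ≠ 1) : IsHyperbolicPeriodic g x₀ := by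
  refine ⟨⟨1, le_rfl, hfix⟩, ?_⟩
  rwa [minimalPeriod_eq_one_iff_isFixedPt.mpr hfix, iterate_one]

/-- The non-hyperbolic periodic points lie on one finite orbit, which is closed. -/
theorem closure_setOf_isPeriodic_subset {g : ℝ → ℝ} (hg : AtMostOneNonHypOrbit g) :
    closure {p | IsPeriodic g p} ⊆
      closure {p | IsHyperbolicPeriodic g p} ∪ {p | IsPeriodic g p} := by
  set N := {p | IsPeriodic g p ∧ ¬ IsHyperbolicPeriodic g p}
  have hN : closure N ⊆ {p | IsPeriodic g p} := by
    rcases N.eq_empty_or_nonempty with hN | ⟨p₀, hp₀, hnh₀⟩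
    · simp [hN]
    have hsub : N ⊆ Orbit g p₀ := fun p ⟨hp, hnh⟩ =>
      hg p p₀ hp hnh hp₀ hnh₀ ▸ (⟨0, rfl⟩ : p ∈ Orbit g p)
    refine (closure_minimal hsub hp₀.orbit_finite.isClosed).trans ?_
    rintro _ ⟨m, rfl⟩
    exact hp₀.apply_iterate m
  calc closure {p | IsPeriodic g p}
      ⊆ closure ({p | IsHyperbolicPeriodic g p} ∪ N) := closure_mono fun p hp => by
        by_cases h : IsHyperbolicPeriodic g p
        exacts [Or.inl h, Or.inr ⟨hp, h⟩]
    _ = closure {p | IsHyperbolicPeriodic g p} ∪ closure N := closure_union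
    _ ⊆ _ := union_subset_union_right _ hN

theorem IsHomoclinicOrbit.iterate_apply {g : ℝ → ℝ} {x₀ : ℝ} {z : ℕ → ℝ}
    (hz : IsHomoclinicOrbit g x₀ z) (k j : ℕ) : g^[j] (z (k + j)) = z k := by
  induction j with
  | zero => rfl
  | succ j ih => rw [← add_assoc, iterate_succ_apply, hz.2.1, ih]

theorem IsHomoclinicOrbit.exists_ne_near {g : ℝ → ℝ} {x₀ : ℝ} {z : ℕ → ℝ}
    (hz : IsHomoclinicOrbit g x₀ z) (hfix : IsFixedPt g x₀) (K : ℕ) {r : ℝ} (hr : 0 < r) :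
    ∃ k, K ≤ k ∧ z k ≠ x₀ ∧ dist (z k) x₀ < r := by
  obtain ⟨K', -, hK'⟩ := hz.2.2.1
  obtain ⟨k, hk, hkK⟩ :=
    ((hz.2.2.2.eventually (ball_mem_nhds x₀ hr)).and (eventually_ge_atTop (max K K'))).exists
  refine ⟨k, (le_max_left _ _).trans hkK, fun hzk => hK' ?_, hk⟩
  have := hz.iterate_apply K' (k - K')
  rw [Nat.add_sub_cancel' ((le_max_right _ _).trans hkK), hzk, hfix.iterate] at this
  exact this.symm

/-- On the `δ`-neighbourhood of `x₀`, `g` moves points to the other side of `x₀` and multiplies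
their distance to `x₀` by at least `μ`. -/
def FlipExpands (g : ℝ → ℝ) (x₀ μ δ : ℝ) : Prop :=
  ∀ t ∈ Icc 0 δ, g (x₀ + t) ≤ x₀ - μ * t ∧ x₀ + μ * t ≤ g (x₀ - t)

theorem FlipExpands.mono {g : ℝ → ℝ} {x₀ μ δ δ' : ℝ} (h : FlipExpands g x₀ μ δ)
    (hδ : δ' ≤ δ) : FlipExpands g x₀ μ δ' :=
  fun t ht => h t ⟨ht.1, ht.2.trans hδ⟩

theorem HasDerivAt.exists_flipExpands {g : ℝ → ℝ} {x₀ m μ : ℝ} (hg : HasDerivAt g m x₀)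
    (hfix : g x₀ = x₀) (hμ : μ < -m) : ∃ δ > 0, FlipExpands g x₀ μ δ := by
  have hslope : ∀ᶠ x in 𝓝[≠] x₀, slope g x₀ x < -μ :=
    hasDerivAt_iff_tendsto_slope.mp hg (eventually_lt_nhds (by linarith))
  obtain ⟨δ, hδ, hball⟩ := Metric.eventually_nhds_iff.mp (eventually_nhdsWithin_iff.mp hslope)
  refine ⟨δ / 2, half_pos hδ, fun t ⟨ht0, htδ⟩ => ?_⟩
  rcases ht0.eq_or_lt with rfl | ht
  · simp [hfix]
  have hdist : ∀ y, |y - x₀| = t → dist y x₀ < δ := fun y hy => by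
    rw [Real.dist_eq, hy]; linarith
  have hright := hball (hdist (x₀ + t) (by simp [abs_of_pos ht])) (by simp [ht.ne'])
  have hleft := hball (hdist (x₀ - t) (by simp [abs_of_pos ht])) (by simp [ht.ne'])
  rw [slope_def_field, hfix, add_sub_cancel_left, div_lt_iff₀ ht] at hright
  rw [slope_def_field, hfix, show x₀ - t - x₀ = -t by ring,
    div_lt_iff_of_neg (neg_neg_of_pos ht)] at hleft
  constructor <;> linarith

section FlipExpands

variable {g : ℝ → ℝ} {x₀ μ δ t : ℝ} {I S : Set ℝ}

theorem FlipExpands.mem_Ioo {a b : ℝ} (h : FlipExpands g x₀ μ δ) (hab : a < b)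
    (hmaps : MapsTo g (Icc a b) (Icc a b)) (hx₀ : x₀ ∈ Icc a b) (hμ : 0 < μ) (hδ : 0 < δ) :
    x₀ ∈ Ioo a b := by
  set t := min δ (b - a)
  have ht : 0 < t := lt_min hδ (sub_pos.2 hab)
  have htδ : t ∈ Icc 0 δ := ⟨ht.le, min_le_left _ _⟩
  have htba : t ≤ b - a := min_le_right _ _
  have hμt : 0 < μ * t := mul_pos hμ ht
  refine ⟨hx₀.1.lt_of_ne fun hax => ?_, hx₀.2.lt_of_ne fun hxb => ?_⟩
  · have := (hmaps ⟨by linarith, by linarith⟩ : g (x₀ + t) ∈ Icc a b).1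
    linarith [(h t htδ).1]
  · have := (hmaps ⟨by linarith, by linarith⟩ : g (x₀ - t) ∈ Icc a b).2
    linarith [(h t htδ).2]

def ContainsSide (S : Set ℝ) (x₀ t : ℝ) : Prop := Icc (x₀ - t) x₀ ⊆ S ∨ Icc x₀ (x₀ + t) ⊆ S

theorem ContainsSide.mono {t' : ℝ} (h : ContainsSide S x₀ t) (ht : t' ≤ t) :
    ContainsSide S x₀ t' :=
  h.imp (fun h => (Icc_subset_Icc (by linarith) le_rfl).trans h)
    (fun h => (Icc_subset_Icc le_rfl (by linarith)).trans h)

theorem containsSide_of_uIcc_subset {v : ℝ} (h : uIcc x₀ v ⊆ S) :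
    ContainsSide S x₀ (dist v x₀) := by
  rw [Real.dist_eq]
  rcases le_total v x₀ with hv | hv
  · left
    rwa [abs_of_nonpos (sub_nonpos.2 hv), show x₀ - -(v - x₀) = v by ring, ← uIcc_of_ge hv]
  · right
    rwa [abs_of_nonneg (sub_nonneg.2 hv), add_sub_cancel, ← uIcc_of_le hv]

theorem FlipExpands.Icc_subset_image (h : FlipExpands g x₀ μ δ) (hfix : g x₀ = x₀)
    (hg : ContinuousOn g S) (ht : t ∈ Icc 0 δ) :
    (Icc x₀ (x₀ + t) ⊆ S → Icc (x₀ - μ * t) x₀ ⊆ g '' S) ∧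
      (Icc (x₀ - t) x₀ ⊆ S → Icc x₀ (x₀ + μ * t) ⊆ g '' S) := by
  constructor
  · intro hS
    calc Icc (x₀ - μ * t) x₀ ⊆ Icc (g (x₀ + t)) (g x₀) :=
          Icc_subset_Icc (by linarith [(h t ht).1]) hfix.ge
      _ ⊆ g '' Icc x₀ (x₀ + t) := intermediate_value_Icc' (by linarith [ht.1]) (hg.mono hS)
      _ ⊆ g '' S := image_mono hS
  · intro hS
    calc Icc x₀ (x₀ + μ * t) ⊆ Icc (g x₀) (g (x₀ - t)) := Icc_subset_Icc hfix.le (h t ht).2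
      _ ⊆ g '' Icc (x₀ - t) x₀ := intermediate_value_Icc' (by linarith [ht.1]) (hg.mono hS)
      _ ⊆ g '' S := image_mono hS

theorem ContainsSide.image (hS : ContainsSide S x₀ t) (h : FlipExpands g x₀ μ δ)
    (hfix : g x₀ = x₀) (hg : ContinuousOn g S) (ht : t ∈ Icc 0 δ) :
    ContainsSide (g '' S) x₀ (μ * t) :=
  hS.symm.imp (h.Icc_subset_image hfix hg ht).1 (h.Icc_subset_image hfix hg ht).2

theorem ContainsSide.image_iterate (hS : ContainsSide S x₀ t) (h : FlipExpands g x₀ μ δ)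
    (hfix : g x₀ = x₀) (hμ : 1 ≤ μ) (hg : ContinuousOn g I) (hmaps : MapsTo g I I)
    (hSI : S ⊆ I) (ht : t ∈ Icc 0 δ) (n : ℕ) :
    ContainsSide (g^[n] '' S) x₀ (min (μ ^ n * t) δ) := by
  induction n with
  | zero => simpa [min_eq_left ht.2] using hS
  | succ n ih =>
    have hsub : g^[n] '' S ⊆ I := ((hmaps.iterate n).mono_left hSI).image_subset
    have hnext := ih.image h hfix (hg.mono hsub)
      ⟨le_min (by have := ht.1; positivity) (ht.1.trans ht.2), min_le_right _ _⟩
    rw [iterate_succ', image_comp]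
    refine hnext.mono ?_
    rw [mul_min_of_nonneg _ _ (by linarith), pow_succ']
    exact min_le_min (by rw [mul_assoc]) (le_mul_of_one_le_left (ht.1.trans ht.2) hμ)

theorem ContainsSide.uIcc_subset_or (hS : ContainsSide S x₀ δ) (h : FlipExpands g x₀ μ δ)
    (hfix : g x₀ = x₀) (hμ : 1 ≤ μ) (hg : ContinuousOn g S) (hδ : 0 ≤ δ) {w : ℝ}
    (hw : w ∈ closedBall x₀ δ) : uIcc x₀ w ⊆ S ∨ uIcc x₀ w ⊆ g '' S := by
  have hstep := h.Icc_subset_image hfix hg ⟨hδ, le_rfl⟩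
  have hμδ : δ ≤ μ * δ := le_mul_of_one_le_left hδ hμ
  rw [Real.closedBall_eq_Icc] at hw
  rcases le_total w x₀ with hwx | hwx
  · have hsub : uIcc x₀ w ⊆ Icc (x₀ - δ) x₀ := by
      rw [uIcc_of_ge hwx]; exact Icc_subset_Icc hw.1 le_rfl
    rcases hS with hL | hR
    · exact Or.inl (hsub.trans hL)
    · exact Or.inr (hsub.trans ((Icc_subset_Icc (by linarith) le_rfl).trans (hstep.1 hR)))
  · have hsub : uIcc x₀ w ⊆ Icc x₀ (x₀ + δ) := by
      rw [uIcc_of_le hwx]; exact Icc_subset_Icc le_rfl hw.2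
    rcases hS with hL | hR
    · exact Or.inr (hsub.trans ((Icc_subset_Icc le_rfl (by linarith)).trans (hstep.2 hL)))
    · exact Or.inl (hsub.trans hR)

/-- The side of `x₀` grows to size `δ`; from then on it switches at every step. -/
theorem exists_uIcc_subset_image_iterate (h : FlipExpands g x₀ μ δ) (hfix : g x₀ = x₀)
    (hμ : 1 < μ) (hδ : 0 < δ) (hg : ContinuousOn g I) (hmaps : MapsTo g I I) (hSI : S ⊆ I)
    {v : ℝ} (hv : uIcc x₀ v ⊆ S) (hvx : v ≠ x₀) {w : ℝ} (hw : w ∈ closedBall x₀ δ) :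
    ∃ N, uIcc x₀ w ⊆ g^[N] '' S := by
  set t := min (dist v x₀) δ
  have ht : 0 < t := lt_min (dist_pos.2 hvx) hδ
  obtain ⟨n, hn⟩ := pow_unbounded_of_one_lt (δ / t) hμ
  have hside := ((containsSide_of_uIcc_subset hv).mono (min_le_left _ δ)).image_iterate h hfix
    hμ.le hg hmaps hSI ⟨ht.le, min_le_right _ _⟩ n
  rw [min_eq_right ((div_lt_iff₀ ht).mp hn).le] at hside
  have hsub : g^[n] '' S ⊆ I := ((hmaps.iterate n).mono_left hSI).image_subset
  rcases hside.uIcc_subset_or h hfix hμ.le (hg.mono hsub) hδ.le hw with h₀ | h₁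
  · exact ⟨n, h₀⟩
  · exact ⟨n + 1, by rwa [iterate_succ', image_comp]⟩

end FlipExpands

theorem uIcc_reflect_eq_closedBall (x x₀ : ℝ) :
    uIcc x₀ (2 * x - x₀) = closedBall x (dist x x₀) := by
  rw [Real.closedBall_eq_Icc, Real.dist_eq]
  rcases le_total x x₀ with h | h
  · rw [uIcc_of_ge (by linarith), abs_of_nonpos (by linarith)]
    congr 1 <;> ring
  · rw [uIcc_of_le (by linarith), abs_of_nonneg (by linarith)]
    congr 1 <;> ring

theorem exists_lt_of_closedBall_subset_image {G : ℝ → ℝ} {x r ζ : ℝ} (hr : 0 ≤ r)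
    (hrζ : r < ζ) (h : closedBall x ζ ⊆ G '' closedBall x r) :
    (∃ p ∈ closedBall x r, G p < p) ∧ ∃ p ∈ closedBall x r, p < G p := by
  obtain ⟨p₁, hp₁, h₁⟩ := h (show x - ζ ∈ closedBall x ζ by
    rw [Real.closedBall_eq_Icc]; constructor <;> linarith)
  obtain ⟨p₂, hp₂, h₂⟩ := h (show x + ζ ∈ closedBall x ζ by
    rw [Real.closedBall_eq_Icc]; constructor <;> linarith)
  refine ⟨⟨p₁, hp₁, ?_⟩, p₂, hp₂, ?_⟩
  · rw [Real.closedBall_eq_Icc] at hp₁; linarith [hp₁.1]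
  · rw [Real.closedBall_eq_Icc] at hp₂; linarith [hp₂.2]

def NowhereConstantOn (g : ℝ → ℝ) (I : Set ℝ) : Prop :=
  ∀ u v, u < v → Icc u v ⊆ I → ∃ s ∈ Icc u v, ∃ t ∈ Icc u v, g s ≠ g t

section NowhereConstantOn

variable {g : ℝ → ℝ} {a b : ℝ}

theorem NowhereConstantOn.iterate (h : NowhereConstantOn g (Icc a b))
    (hg : ContinuousOn g (Icc a b)) (hmaps : MapsTo g (Icc a b) (Icc a b)) (n : ℕ) :
    NowhereConstantOn g^[n] (Icc a b) := by
  induction n with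
  | zero => exact fun u v huv _ => ⟨u, left_mem_Icc.2 huv.le, v, right_mem_Icc.2 huv.le, huv.ne⟩
  | succ n ih =>
    intro u v huv huvI
    obtain ⟨s, hs, t, ht, hne⟩ := ih u v huv huvI
    have hJ : uIcc (g^[n] s) (g^[n] t) ⊆ Icc a b :=
      uIcc_subset_Icc (hmaps.iterate n (huvI hs)) (hmaps.iterate n (huvI ht))
    obtain ⟨s', hs', t', ht', hne'⟩ := h _ _ (min_lt_max.2 hne) hJ
    have hst : uIcc s t ⊆ Icc u v := uIcc_subset_Icc hs ht
    have hIVT := intermediate_value_uIcc ((hg.iterate hmaps n).mono (hst.trans huvI))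
    obtain ⟨s'', hs'', rfl⟩ := hIVT hs'
    obtain ⟨t'', ht'', rfl⟩ := hIVT ht'
    exact ⟨s'', hst hs'', t'', hst ht'', by simpa only [iterate_succ_apply'] using hne'⟩

theorem NowhereConstantOn.exists_uIcc_subset_image (h : NowhereConstantOn g (Icc a b))
    (hg : ContinuousOn g (Icc a b)) {u v x : ℝ} (huv : u < v) (hsub : Icc u v ⊆ Icc a b)
    (hx : x ∈ Icc u v) : ∃ w ≠ g x, uIcc (g x) w ⊆ g '' Icc u v := by
  obtain ⟨s, hs, t, ht, hne⟩ := h u v huv hsub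
  obtain ⟨p, hp, hpx⟩ : ∃ p ∈ Icc u v, g p ≠ g x := by
    by_cases hsx : g s = g x
    · exact ⟨t, ht, fun htx => hne (hsx.trans htx.symm)⟩
    · exact ⟨s, hs, hsx⟩
  have hxp := uIcc_subset_Icc hx hp
  exact ⟨g p, hpx, (intermediate_value_uIcc (hg.mono (hxp.trans hsub))).trans (image_mono hxp)⟩

end NowhereConstantOn

section Family

variable {Λ : Type*} [TopologicalSpace Λ] {f : Λ → ℝ → ℝ} {U : Set Λ} {lam₀ : Λ}

theorem continuousOn_uncurry_iterate {s : Set ℝ} (hf : ContinuousOn (uncurry f) (U ×ˢ s))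
    (hmaps : ∀ lam ∈ U, MapsTo (f lam) s s) (n : ℕ) :
    ContinuousOn (uncurry fun lam => (f lam)^[n]) (U ×ˢ s) := by
  induction n with
  | zero => exact continuous_snd.continuousOn
  | succ n ih =>
    have hmap : MapsTo (fun q : Λ × ℝ => (q.1, (f q.1)^[n] q.2)) (U ×ˢ s) (U ×ˢ s) :=
      fun q hq => ⟨hq.1, (hmaps q.1 hq.1).iterate n hq.2⟩
    refine (hf.comp (continuous_fst.continuousOn.prodMk ih) hmap).congr fun q _ => ?_
    simp [uncurry, iterate_succ_apply']

theorem eventually_exists_isFixedPt {a b : ℝ} (hf : ContinuousOn (uncurry f) (U ×ˢ Icc a b))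
    (hU : U ∈ 𝓝 lam₀) {p₁ p₂ : ℝ} (hp₁ : p₁ ∈ Icc a b) (hp₂ : p₂ ∈ Icc a b)
    (h₁ : f lam₀ p₁ < p₁) (h₂ : p₂ < f lam₀ p₂) :
    ∀ᶠ lam in 𝓝 lam₀, ∃ p ∈ uIcc p₁ p₂, IsFixedPt (f lam) p := by
  have hcont : ∀ p ∈ Icc a b, ContinuousAt (fun lam => f lam p) lam₀ := fun p hp =>
    (hf.uncurry_right p hp).continuousAt hU
  filter_upwards [hU, (hcont p₁ hp₁).eventually (eventually_lt_nhds h₁),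
    (hcont p₂ hp₂).eventually (eventually_gt_nhds h₂)] with lam hlam hlt hgt
  have hφ : ContinuousOn (fun x => f lam x - x) (uIcc p₁ p₂) :=
    ((hf.uncurry_left lam hlam).mono (uIcc_subset_Icc hp₁ hp₂)).sub continuousOn_id
  obtain ⟨p, hp, hfp⟩ := intermediate_value_uIcc hφ
    (show (0 : ℝ) ∈ uIcc (f lam p₁ - p₁) (f lam p₂ - p₂) from
      Set.mem_uIcc.2 (Or.inl ⟨by linarith, by linarith⟩))
  exact ⟨p, hp, sub_eq_zero.mp hfp⟩

theorem eventually_exists_isPeriodic_near_iterate {s : Set ℝ}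
    (hf : ContinuousOn (uncurry f) (U ×ˢ s)) (hU : U ∈ 𝓝 lam₀)
    (hmaps : ∀ lam ∈ U, MapsTo (f lam) s s) {x : ℝ} (hx : x ∈ s)
    (hper : ∀ η > 0, ∀ᶠ lam in 𝓝 lam₀, ∃ p ∈ s, dist p x < η ∧ IsPeriodic (f lam) p)
    (j : ℕ) {ε : ℝ} (hε : 0 < ε) :
    ∀ᶠ lam in 𝓝 lam₀, ∃ q, IsPeriodic (f lam) q ∧ dist q ((f lam₀)^[j] x) < ε := by
  have hev := (continuousOn_uncurry_iterate hf hmaps j (lam₀, x)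
    ⟨mem_of_mem_nhds hU, hx⟩).eventually (ball_mem_nhds _ hε)
  rw [nhdsWithin_prod_eq, nhdsWithin_eq_nhds.mpr hU] at hev
  obtain ⟨P, hP, Q, hQ, hPQ⟩ := eventually_prod_iff.mp hev
  obtain ⟨η, hη, hηQ⟩ := Metric.mem_nhdsWithin_iff.mp hQ
  filter_upwards [hP, hper η hη] with lam hPlam ⟨p, hps, hpx, hp⟩
  exact ⟨(f lam)^[j] p, hp.apply_iterate j, hPQ hPlam (hηQ ⟨hpx, hps⟩)⟩

theorem eventually_exists_isPeriodic_near_preimage {a b x₀ μ δ : ℝ}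
    (hf : ContinuousOn (uncurry f) (U ×ˢ Icc a b)) (hU : U ∈ 𝓝 lam₀)
    (hmaps : ∀ lam ∈ U, MapsTo (f lam) (Icc a b) (Icc a b))
    (hnc : NowhereConstantOn (f lam₀) (Icc a b)) (hexp : FlipExpands (f lam₀) x₀ μ δ)
    (hfix : f lam₀ x₀ = x₀) (hμ : 1 < μ) (hball : closedBall x₀ δ ⊆ Icc a b) {x : ℝ}
    (hx : x ≠ x₀) (hxδ : 2 * dist x x₀ ≤ δ) {k : ℕ} (hk : (f lam₀)^[k] x = x₀) {η : ℝ}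
    (hη : 0 < η) : ∀ᶠ lam in 𝓝 lam₀, ∃ p ∈ Icc a b, dist p x < η ∧ IsPeriodic (f lam) p := by
  set g := f lam₀
  have hgc : ContinuousOn g (Icc a b) := hf.uncurry_left lam₀ (mem_of_mem_nhds hU)
  have hgm := hmaps lam₀ (mem_of_mem_nhds hU)
  set ζ := dist x x₀
  have hζ : 0 < ζ := dist_pos.2 hx
  set r := min (η / 2) (ζ / 2)
  have hr : 0 < r := lt_min (half_pos hη) (half_pos hζ)
  have hrζ : r < ζ := (min_le_right _ _).trans_lt (half_lt_self hζ)
  have hZ : closedBall x r ⊆ Icc a b :=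
    (closedBall_subset_closedBall' (by linarith)).trans hball
  obtain ⟨w, hw, hwZ⟩ := (hnc.iterate hgc hgm k).exists_uIcc_subset_image (hgc.iterate hgm k)
    (by linarith : x - r < x + r) (Real.closedBall_eq_Icc ▸ hZ)
    (show x ∈ Icc (x - r) (x + r) by constructor <;> linarith)
  rw [hk, ← Real.closedBall_eq_Icc] at hwZ
  rw [hk] at hw
  -- `uIcc x₀ (2 * x - x₀) = closedBall x ζ` covers `closedBall x r` with a margin.
  have hreflect : 2 * x - x₀ ∈ closedBall x₀ δ := by
    rwa [mem_closedBall, Real.dist_eq, show 2 * x - x₀ - x₀ = 2 * (x - x₀) by ring, abs_mul,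
      abs_two, ← Real.dist_eq]
  obtain ⟨N, hN⟩ := exists_uIcc_subset_image_iterate hexp hfix hμ (by linarith) hgc hgm
    ((hgm.iterate k).mono_left hZ).image_subset hwZ hw hreflect
  rw [← image_comp, ← iterate_add, uIcc_reflect_eq_closedBall] at hN
  obtain ⟨⟨p₁, hp₁, h₁⟩, p₂, hp₂, h₂⟩ := exists_lt_of_closedBall_subset_image hr.le hrζ hN
  have hk0 : k ≠ 0 := by rintro rfl; exact hx hk
  filter_upwards [eventually_exists_isFixedPt (f := fun lam => (f lam)^[N + k])
    (continuousOn_uncurry_iterate hf hmaps (N + k)) hU (hZ hp₁) (hZ hp₂) h₁ h₂]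
    with lam ⟨p, hp, hfixp⟩
  have hpZ : p ∈ closedBall x r := by
    rw [Real.closedBall_eq_Icc] at hp₁ hp₂ ⊢; exact uIcc_subset_Icc hp₁ hp₂ hp
  exact ⟨p, hZ hpZ, (mem_closedBall.1 hpZ).trans_lt ((min_le_left _ _).trans_lt
    (half_lt_self hη)), N + k, by omega, hfixp⟩

theorem IsHomoclinicOrbit.eventually_exists_isPeriodic {a b x₀ m : ℝ} {z : ℕ → ℝ}
    (hz : IsHomoclinicOrbit (f lam₀) x₀ z) (hab : a < b)
    (hf : ContinuousOn (uncurry f) (U ×ˢ Icc a b)) (hU : U ∈ 𝓝 lam₀)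
    (hmaps : ∀ lam ∈ U, MapsTo (f lam) (Icc a b) (Icc a b))
    (hnc : NowhereConstantOn (f lam₀) (Icc a b)) (hx₀ : x₀ ∈ Icc a b) (hfix : f lam₀ x₀ = x₀)
    (hder : HasDerivAt (f lam₀) m x₀) (hm : m < -1) (K : ℕ) {ε : ℝ} (hε : 0 < ε) :
    ∀ᶠ lam in 𝓝 lam₀, ∃ q, IsPeriodic (f lam) q ∧ dist q (z K) < ε := by
  set g := f lam₀
  obtain ⟨μ, hμ, hμm⟩ := exists_between (show 1 < -m by linarith)
  obtain ⟨δ, hδ, hexp⟩ := hder.exists_flipExpands hfix hμm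
  have hx₀' := hexp.mem_Ioo hab (hmaps lam₀ (mem_of_mem_nhds hU)) hx₀ (by linarith) hδ
  set δ' := min δ (min (x₀ - a) (b - x₀))
  have hδ' : 0 < δ' := lt_min hδ (lt_min (sub_pos.2 hx₀'.1) (sub_pos.2 hx₀'.2))
  have hball : closedBall x₀ δ' ⊆ Icc a b := by
    have : δ' ≤ x₀ - a := (min_le_right _ _).trans (min_le_left _ _)
    have : δ' ≤ b - x₀ := (min_le_right _ _).trans (min_le_right _ _)
    rw [Real.closedBall_eq_Icc]
    exact Icc_subset_Icc (by linarith) (by linarith)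
  obtain ⟨k, hKk, hzk, hzkx₀⟩ := hz.exists_ne_near hfix K (half_pos hδ')
  have hper := fun η (hη : 0 < η) => eventually_exists_isPeriodic_near_preimage hf hU hmaps hnc
    (hexp.mono (min_le_left _ _)) hfix hμ hball hzk (by linarith)
    (by simpa [hz.1] using hz.iterate_apply 0 k) hη
  have hzK : g^[k - K] (z k) = z K := by
    simpa [Nat.add_sub_cancel' hKk] using hz.iterate_apply K (k - K)
  rw [← hzK]
  exact eventually_exists_isPeriodic_near_iterate hf hU hmaps
    (hball (mem_closedBall.2 (by linarith))) hper (k - K) hε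

end Family

theorem no_explosion_negative_derivative_general
(f : ℝ → ℝ → ℝ) (a b c d : ℝ) (hab : a < b)
    (hmaps : ∀ lam ∈ Set.Ioo c d, Set.MapsTo (f lam) (Set.Icc a b) (Set.Icc a b))
    (hC1 : ContDiffOn ℝ 1 (fun q : ℝ × ℝ => f q.1 q.2) (Set.Ioo c d ×ˢ Set.Icc a b))
    (lam0 : ℝ) (hlam0 : lam0 ∈ Set.Ioo c d)
    (hnc : ∀ u v : ℝ, u < v → Set.Icc u v ⊆ Set.Icc a b →
      ∃ s ∈ Set.Icc u v, ∃ t ∈ Set.Icc u v, f lam0 s ≠ f lam0 t)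
    (hH3 : AtMostOneNonHypOrbit (f lam0))
    (x0 : ℝ) (hx0I : x0 ∈ Set.Icc a b)
    (hfix : f lam0 x0 = x0) (hder : deriv (f lam0) x0 < -1)
    (z : ℕ → ℝ) (hhom : IsHomoclinicOrbit (f lam0) x0 z)
    (K : ℕ) (y : ℝ) (hy : y = z K) :
    y ∈ closure {p : ℝ | IsHyperbolicPeriodic (f lam0) p} ∧
      ¬ ChainExplosionPoint f (Set.Ioo c d) lam0 y := by
  subst hy
  have hU : Ioo c d ∈ 𝓝 lam0 := Ioo_mem_nhds hlam0.1 hlam0.2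
  have hdiff := (differentiableAt_of_deriv_ne_zero (by linarith : deriv (f lam0) x0 ≠ 0))
  have hnear : ∀ ε > 0, ∀ᶠ lam in 𝓝 lam0, ∃ q, IsPeriodic (f lam) q ∧ dist q (z K) < ε :=
    fun ε hε => hhom.eventually_exists_isPeriodic hab hC1.continuousOn hU hmaps hnc hx0I hfix
      hdiff.hasDerivAt hder K hε
  constructor
  · have hmem : z K ∈ closure {p | IsPeriodic (f lam0) p} := Metric.mem_closure_iff.2
      fun ε hε => let ⟨q, hq, hqK⟩ := (hnear ε hε).self_of_nhds; ⟨q, hq, by rwa [dist_comm]⟩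
    refine (closure_setOf_isPeriodic_subset hH3 hmem).elim id fun hper => ?_
    rw [hper.eq_of_iterate_eq hfix (by simpa [hhom.1] using hhom.iterate_apply 0 K)]
    exact subset_closure (IsFixedPt.isHyperbolicPeriodic hfix (by rw [abs_of_neg] <;> linarith))
  · rintro ⟨-, δ, hδ, hleft | hright⟩
    · obtain ⟨lam, ⟨⟨q, hq, hqK⟩, hlam⟩, hlt⟩ :=
        ((((hnear δ hδ).and hU).filter_mono nhdsWithin_le_nhds).and
          (self_mem_nhdsWithin : Iio lam0 ∈ 𝓝[<] lam0)).exists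
      exact hleft lam hlam hlt q hqK hq.chainRecurrent
    · obtain ⟨lam, ⟨⟨q, hq, hqK⟩, hlam⟩, hgt⟩ :=
        ((((hnear δ hδ).and hU).filter_mono nhdsWithin_le_nhds).and
          (self_mem_nhdsWithin : Ioi lam0 ∈ 𝓝[>] lam0)).exists
      exact hright lam hlam hgt q hqK hq.chainRecurrent

/-- no explosions for homoclinic orbits to fixed points with negative
derivative. -/
theorem no_explosion_negative_derivative
(f : ℝ → ℝ → ℝ) (a b c d : ℝ) (hab : a < b) (hcd : c < d)
    (hmaps : ∀ lam ∈ Set.Ioo c d, Set.MapsTo (f lam) (Set.Icc a b) (Set.Icc a b))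
    (hC1 : ContDiffOn ℝ 1 (fun q : ℝ × ℝ => f q.1 q.2) (Set.Ioo c d ×ˢ Set.Icc a b))
    (hC2 : ∀ lam ∈ Set.Ioo c d, ContDiffOn ℝ 2 (f lam) (Set.Icc a b))
    (lam0 : ℝ) (hlam0 : lam0 ∈ Set.Ioo c d)
    (hnc : ∀ u v : ℝ, u < v → Set.Icc u v ⊆ Set.Icc a b →
      ∃ s ∈ Set.Icc u v, ∃ t ∈ Set.Icc u v, f lam0 s ≠ f lam0 t)
    (hH3 : AtMostOneNonHypOrbit (f lam0))
    (x0 : ℝ) (hx0I : x0 ∈ Set.Icc a b)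
    (hfix : f lam0 x0 = x0) (hder : deriv (f lam0) x0 < -1)
    (z : ℕ → ℝ) (hhom : IsHomoclinicOrbit (f lam0) x0 z)
    (hcrit : ∀ k l : ℕ, deriv (f lam0) (z k) = 0 → deriv (f lam0) (z l) = 0 → z k = z l)
    (K : ℕ) (hK : 1 ≤ K) (y : ℝ) (hy : y = z K) :
    y ∈ closure {p : ℝ | IsHyperbolicPeriodic (f lam0) p} ∧
      ¬ ChainExplosionPoint f (Set.Ioo c d) lam0 y :=
  no_explosion_negative_derivative_general f a b c d hab hmaps hC1 lam0 hlam0 hnc hH3 x0 hx0I hfix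
    hder z hhom K y hy
end

section
/- Let g be a C² map of a compact interval I into itself that is not constant on any subinterval, let x₀ be a repelling fixed point of g with g'(x₀) < −1, and let (z_{−k}) be a homoclinic orbit to x₀ containing at most one critical point of g. Then for every point y = z_{−K} of the orbit there exist periodic points p_j of g with least periods n_j such that p_j → y and n_j → ∞ as j → ∞. -/
open Set Metric Filter Function Topology

/-!
Since `g'(x0) < -1`, near `x0` the map `g` swaps the two sides of `x0` and multiplies distances
to `x0` by some `μ > 1`. Hence the iterates of a nondegenerate interval containing `x0` cannot stay
in `[x0 - δ, x0 + δ]`; being intervals through `x0`, they eventually cover a whole side of it, and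
one more iterate covers the other side.

Pick a point `z j` of the orbit close to `x0` and a small interval `W` around it, not containing
`x0`, such that `g^[j - K] W` lies close to `z K`. As `g` is nowhere locally constant, `g^[j] W` is
a nondegenerate interval through `x0 = g^[j] (z j)`, so some iterate of it covers `W`, and `W`
contains a periodic point `p`; then `g^[j - K] p` is a periodic point close to `z K`.
The least periods tend to infinity: a limit of periodic points of a fixed period `m` is
`m`-periodic, the only periodic point on the orbit is `x0`, and the repelling fixed point `x0` is
isolated among the points of period `m`.
-/

section Dynamics

variable {α : Type*} {f : α → α}

theorem Function.IsPeriodicPt.eq_of_iterate_eq_isFixedPt {n k : ℕ} {p x : α}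
    (hp : IsPeriodicPt f n p) (hn : 0 < n) (hx : IsFixedPt f x) (hk : f^[k] p = x) : p = x := by
  have hkn : k ≤ n * k := Nat.le_mul_of_pos_left k hn
  calc p = f^[n * k] p := (hp.mul_const k).eq.symm
    _ = f^[n * k - k] (f^[k] p) := by rw [← iterate_add_apply, Nat.sub_add_cancel hkn]
    _ = x := by rw [hk, hx.iterate]

theorem tendsto_minimalPeriod_atTop {ι : Type*} {l : Filter ι} {q : ι → α}
    (hq : ∀ j, q j ∈ periodicPts f) (hne : ∀ m, 0 < m → ∀ᶠ j in l, f^[m] (q j) ≠ q j) :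
    Tendsto (fun j => minimalPeriod f (q j)) l atTop := by
  refine tendsto_atTop.2 fun M => ?_
  have hall : ∀ᶠ j in l, ∀ m ∈ Iio M, 0 < m → f^[m] (q j) ≠ q j :=
    (eventually_all_finite (finite_Iio M)).2 fun m _ =>
      eventually_all.2 (hne m)
  filter_upwards [hall] with j hj
  by_contra! hlt
  exact hj _ hlt (minimalPeriod_pos_of_mem_periodicPts (hq j)) iterate_minimalPeriod

end Dynamics

theorem HasDerivAt.eventually_iterate_ne {g : ℝ → ℝ} {g' x0 : ℝ} (hg : HasDerivAt g g' x0)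
    (hfix : g x0 = x0) (hg' : 1 < |g'|) {m : ℕ} (hm : 0 < m) :
    ∀ᶠ x in 𝓝[≠] x0, g^[m] x ≠ x := by
  have hslope := hasDerivAt_iff_tendsto_slope.1 (HasDerivAt.iterate x0 hg hfix m)
  have hne : g' ^ m ≠ 1 := fun h => by
    simpa [← abs_pow, h] using one_lt_pow₀ hg' hm.ne'
  filter_upwards [hslope.eventually_ne hne, self_mem_nhdsWithin] with x hx hxx0 heq
  apply hx
  rw [slope_def_field, heq, iterate_fixed hfix]
  exact div_self (sub_ne_zero.2 hxx0)

theorem exists_lt_and_image_Icc_eq_Icc {f : ℝ → ℝ} {u v : ℝ} (huv : u < v)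
    (hf : ContinuousOn f (Icc u v)) (hnc : ∃ s ∈ Icc u v, ∃ t ∈ Icc u v, f s ≠ f t) :
    ∃ c d, c < d ∧ f '' Icc u v = Icc c d := by
  obtain ⟨s, hs, t, ht, hst⟩ := hnc
  have himg := hf.image_Icc huv.le
  refine ⟨_, _, ?_, himg⟩
  have hs' := himg ▸ mem_image_of_mem f hs
  have ht' := himg ▸ mem_image_of_mem f ht
  by_contra! hle
  exact hst (by linarith [hs'.1, hs'.2, ht'.1, ht'.2])

theorem exists_lt_and_iterate_image_Icc_eq_Icc {g : ℝ → ℝ} {a b : ℝ}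
    (hg : ContinuousOn g (Icc a b)) (hmaps : MapsTo g (Icc a b) (Icc a b))
    (hnc : ∀ u v : ℝ, u < v → Icc u v ⊆ Icc a b → ∃ s ∈ Icc u v, ∃ t ∈ Icc u v, g s ≠ g t)
    (n : ℕ) {u v : ℝ} (huv : u < v) (hsub : Icc u v ⊆ Icc a b) :
    ∃ c d, c < d ∧ g^[n] '' Icc u v = Icc c d := by
  induction n with
  | zero => exact ⟨u, v, huv, image_id _⟩
  | succ n ih =>
    obtain ⟨c, d, hcd, himg⟩ := ih
    have hcdI : Icc c d ⊆ Icc a b := himg ▸ ((hmaps.iterate n).mono_left hsub).image_subset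
    rw [iterate_succ', image_comp, himg]
    exact exists_lt_and_image_Icc_eq_Icc hcd (hg.mono hcdI) (hnc c d hcd hcdI)

theorem subset_Icc_of_subset_side {x0 δ : ℝ} {S : Set ℝ} (hδ : 0 ≤ δ)
    (hS : S ⊆ Icc x0 (x0 + δ) ∨ S ⊆ Icc (x0 - δ) x0) : S ⊆ Icc (x0 - δ) (x0 + δ) := by
  rcases hS with hS | hS
  · exact hS.trans (Icc_subset_Icc (by linarith) le_rfl)
  · exact hS.trans (Icc_subset_Icc le_rfl (by linarith))

def FlipsAndExpands (g : ℝ → ℝ) (x0 μ δ : ℝ) : Prop :=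
  (∀ x ∈ Icc x0 (x0 + δ), g x ≤ x0 - μ * (x - x0)) ∧
  (∀ x ∈ Icc (x0 - δ) x0, x0 + μ * (x0 - x) ≤ g x)

theorem HasDerivAt.eventually_flipsAndExpands {g : ℝ → ℝ} {g' x0 μ : ℝ}
    (hg : HasDerivAt g g' x0) (hfix : g x0 = x0) (hμ : g' < -μ) :
    ∀ᶠ δ in 𝓝[>] 0, FlipsAndExpands g x0 μ δ := by
  have hslope := (hasDerivAt_iff_tendsto_slope.1 hg).eventually (gt_mem_nhds hμ)
  obtain ⟨ε, hε, hball⟩ := Metric.eventually_nhds_iff.1 (eventually_nhdsWithin_iff.1 hslope)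
  have key : ∀ x, |x - x0| < ε → x ≠ x0 →
      g x - x0 = (x - x0) * slope g x0 x ∧ slope g x0 x < -μ := fun x hx hne =>
    ⟨by rw [← smul_eq_mul, sub_smul_slope, vsub_eq_sub, hfix],
      hball (by rwa [Real.dist_eq]) hne⟩
  filter_upwards [Ioo_mem_nhdsGT hε] with δ hδ
  constructor
  · intro x hx
    rcases hx.1.eq_or_lt with rfl | hlt
    · simp [hfix]
    · obtain ⟨h1, h2⟩ := key x (by rw [abs_lt]; constructor <;> linarith [hδ.2, hx.2]) hlt.ne'
      nlinarith
  · intro x hx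
    rcases hx.2.eq_or_lt with rfl | hlt
    · simp [hfix]
    · obtain ⟨h1, h2⟩ := key x (by rw [abs_lt]; constructor <;> linarith [hδ.2, hx.1]) hlt.ne
      nlinarith

namespace FlipsAndExpands

variable {g : ℝ → ℝ} {x0 μ δ : ℝ}

theorem isFixedPt (h : FlipsAndExpands g x0 μ δ) (hδ : 0 ≤ δ) : IsFixedPt g x0 :=
  le_antisymm (by simpa using h.1 x0 ⟨le_rfl, by linarith⟩)
    (by simpa using h.2 x0 ⟨by linarith, le_rfl⟩)

theorem mem_Ioo {a b : ℝ} (h : FlipsAndExpands g x0 μ δ) (hμ : 0 < μ) (hδ : 0 < δ)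
    (hab : a < b) (hmaps : MapsTo g (Icc a b) (Icc a b)) (hx0 : x0 ∈ Icc a b) :
    x0 ∈ Ioo a b := by
  have hax0 : a < x0 := by
    by_contra! hle
    have hx0a : x0 = a := le_antisymm hle hx0.1
    set t := min δ (b - a)
    have ht : 0 < t := lt_min hδ (by linarith)
    have hgx := h.1 (x0 + t) ⟨by linarith, by linarith [min_le_left δ (b - a)]⟩
    have := (hmaps (show x0 + t ∈ Icc a b from
      ⟨by linarith, by linarith [min_le_right δ (b - a)]⟩)).1
    nlinarith
  refine ⟨hax0, ?_⟩
  by_contra! hle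
  have hx0b : x0 = b := le_antisymm hx0.2 hle
  set t := min δ (x0 - a)
  have ht : 0 < t := lt_min hδ (by linarith)
  have hgx := h.2 (x0 - t) ⟨by linarith [min_le_left δ (x0 - a)], by linarith⟩
  have := (hmaps (show x0 - t ∈ Icc a b from
    ⟨by linarith [min_le_right δ (x0 - a)], by linarith⟩)).2
  nlinarith

theorem exists_iterate_image_not_subset (h : FlipsAndExpands g x0 μ δ) (hμ : 1 < μ)
    {A : Set ℝ} {α β : ℝ} (hα : α ∈ A) (hβ : β ∈ A) (hαx : α ≤ x0) (hxβ : x0 ≤ β)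
    (hαβ : α < β) : ∃ n, ¬ g^[n] '' A ⊆ Icc (x0 - δ) (x0 + δ) := by
  by_contra! hB
  have hspread : ∀ n, ∃ α' ∈ g^[n] '' A, ∃ β' ∈ g^[n] '' A,
      α' ≤ x0 ∧ x0 ≤ β' ∧ μ ^ n * (β - α) ≤ β' - α' := by
    intro n
    induction n with
    | zero => exact ⟨α, ⟨α, hα, rfl⟩, β, ⟨β, hβ, rfl⟩, hαx, hxβ, by simp⟩
    | succ n ih =>
      obtain ⟨α', hα', β', hβ', hα'x, hxβ', hlen⟩ := ih
      have hgβ := h.1 β' ⟨hxβ', (hB n hβ').2⟩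
      have hgα := h.2 α' ⟨(hB n hα').1, hα'x⟩
      rw [iterate_succ', image_comp]
      refine ⟨g β', mem_image_of_mem g hβ', g α', mem_image_of_mem g hα', by nlinarith,
        by nlinarith, ?_⟩
      calc μ ^ (n + 1) * (β - α) = μ * (μ ^ n * (β - α)) := by ring
        _ ≤ μ * (β' - α') := by gcongr
        _ ≤ g α' - g β' := by linarith
  obtain ⟨n, hn⟩ := pow_unbounded_of_one_lt (2 * δ / (β - α)) hμ
  obtain ⟨α', hα', β', hβ', -, -, hlen⟩ := hspread n
  have h1 := hB n hα'
  have h2 := hB n hβ'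
  rw [div_lt_iff₀ (by linarith)] at hn
  linarith [h1.1, h2.2]

theorem Icc_subset_image_Icc_left (h : FlipsAndExpands g x0 μ δ) (hμ : 1 ≤ μ) (hδ : 0 ≤ δ)
    (hg : ContinuousOn g (Icc x0 (x0 + δ))) : Icc (x0 - δ) x0 ⊆ g '' Icc x0 (x0 + δ) := by
  refine Subset.trans ?_ (intermediate_value_Icc' (by linarith) hg)
  have hgδ := h.1 (x0 + δ) ⟨by linarith, le_rfl⟩
  exact Icc_subset_Icc (by nlinarith) (h.isFixedPt hδ).ge

theorem Icc_subset_image_Icc_right (h : FlipsAndExpands g x0 μ δ) (hμ : 1 ≤ μ) (hδ : 0 ≤ δ)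
    (hg : ContinuousOn g (Icc (x0 - δ) x0)) : Icc x0 (x0 + δ) ⊆ g '' Icc (x0 - δ) x0 := by
  refine Subset.trans ?_ (intermediate_value_Icc' (by linarith) hg)
  have hgδ := h.2 (x0 - δ) ⟨le_rfl, by linarith⟩
  exact Icc_subset_Icc (h.isFixedPt hδ).le (by nlinarith)

variable {a b c d : ℝ}

theorem exists_side_subset_iterate_image (h : FlipsAndExpands g x0 μ δ) (hμ : 1 < μ)
    (hδ : 0 ≤ δ) (hg : ContinuousOn g (Icc a b)) (hmaps : MapsTo g (Icc a b) (Icc a b))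
    (hcd : c < d) (hcdI : Icc c d ⊆ Icc a b) (hx0 : x0 ∈ Icc c d) :
    ∃ n, Icc x0 (x0 + δ) ⊆ g^[n] '' Icc c d ∨ Icc (x0 - δ) x0 ⊆ g^[n] '' Icc c d := by
  obtain ⟨n, hn⟩ := h.exists_iterate_image_not_subset hμ (left_mem_Icc.2 hcd.le)
    (right_mem_Icc.2 hcd.le) hx0.1 hx0.2 hcd
  obtain ⟨y, hy, hyB⟩ := not_subset.1 hn
  have hconn : IsPreconnected (g^[n] '' Icc c d) :=
    isPreconnected_Icc.image _ ((hg.iterate hmaps n).mono hcdI)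
  have hx0n : x0 ∈ g^[n] '' Icc c d := ⟨x0, hx0, (h.isFixedPt hδ).iterate n⟩
  refine ⟨n, ?_⟩
  rcases le_total y x0 with hyx | hxy
  · right
    have : y ≤ x0 - δ := by
      by_contra! hlt
      exact hyB ⟨hlt.le, by linarith⟩
    exact (Icc_subset_Icc this le_rfl).trans (hconn.Icc_subset hy hx0n)
  · left
    have : x0 + δ ≤ y := by
      by_contra! hlt
      exact hyB ⟨by linarith, hlt.le⟩
    exact (Icc_subset_Icc le_rfl this).trans (hconn.Icc_subset hx0n hy)

theorem exists_subset_iterate_image (h : FlipsAndExpands g x0 μ δ) (hμ : 1 < μ) (hδ : 0 ≤ δ)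
    (hg : ContinuousOn g (Icc a b)) (hmaps : MapsTo g (Icc a b) (Icc a b))
    (hB : Icc (x0 - δ) (x0 + δ) ⊆ Icc a b) (hcd : c < d) (hcdI : Icc c d ⊆ Icc a b)
    (hx0 : x0 ∈ Icc c d) {W : Set ℝ} (hW : W ⊆ Icc x0 (x0 + δ) ∨ W ⊆ Icc (x0 - δ) x0) :
    ∃ n, W ⊆ g^[n] '' Icc c d := by
  have hRL := h.Icc_subset_image_Icc_left hμ.le hδ
    (hg.mono ((Icc_subset_Icc (by linarith) le_rfl).trans hB))
  have hLR := h.Icc_subset_image_Icc_right hμ.le hδ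
    (hg.mono ((Icc_subset_Icc le_rfl (by linarith)).trans hB))
  obtain ⟨n, hn⟩ := h.exists_side_subset_iterate_image hμ hδ hg hmaps hcd hcdI hx0
  have hstep {S : Set ℝ} (hS : S ⊆ g^[n] '' Icc c d) : g '' S ⊆ g^[n + 1] '' Icc c d := by
    rw [iterate_succ', image_comp]
    exact image_mono hS
  rcases hn with hn | hn <;> rcases hW with hW | hW
  · exact ⟨n, hW.trans hn⟩
  · exact ⟨n + 1, hW.trans (hRL.trans (hstep hn))⟩
  · exact ⟨n + 1, hW.trans (hLR.trans (hstep hn))⟩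
  · exact ⟨n, hW.trans hn⟩

theorem exists_mem_periodicPts (h : FlipsAndExpands g x0 μ δ) (hμ : 1 < μ) (hδ : 0 ≤ δ)
    (hg : ContinuousOn g (Icc a b)) (hmaps : MapsTo g (Icc a b) (Icc a b))
    (hnc : ∀ u v : ℝ, u < v → Icc u v ⊆ Icc a b → ∃ s ∈ Icc u v, ∃ t ∈ Icc u v, g s ≠ g t)
    (hB : Icc (x0 - δ) (x0 + δ) ⊆ Icc a b) {w₁ w₂ : ℝ} (hw : w₁ < w₂)
    (hW : Icc w₁ w₂ ⊆ Icc x0 (x0 + δ) ∨ Icc w₁ w₂ ⊆ Icc (x0 - δ) x0) {N : ℕ} (hN : 0 < N)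
    (hx0 : x0 ∈ g^[N] '' Icc w₁ w₂) : ∃ p ∈ Icc w₁ w₂, p ∈ periodicPts g := by
  have hWI : Icc w₁ w₂ ⊆ Icc a b := (subset_Icc_of_subset_side hδ hW).trans hB
  obtain ⟨c, d, hcd, himg⟩ := exists_lt_and_iterate_image_Icc_eq_Icc hg hmaps hnc N hw hWI
  have hcdI : Icc c d ⊆ Icc a b := himg ▸ ((hmaps.iterate N).mono_left hWI).image_subset
  obtain ⟨n, hn⟩ := h.exists_subset_iterate_image hμ hδ hg hmaps hB hcd hcdI (himg ▸ hx0) hW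
  rw [← himg, ← image_comp, ← iterate_add] at hn
  obtain ⟨p, hp, hfix⟩ :=
    exists_mem_Icc_isFixedPt_of_surjOn ((hg.iterate hmaps _).mono hWI) hw.le hn
  exact ⟨p, hp, mk_mem_periodicPts (by omega) hfix⟩

end FlipsAndExpands

theorem exists_flipsAndExpands {g : ℝ → ℝ} {g' a b x0 : ℝ} (hab : a < b)
    (hmaps : MapsTo g (Icc a b) (Icc a b)) (hx0 : x0 ∈ Icc a b) (hg : HasDerivAt g g' x0)
    (hfix : g x0 = x0) (hg' : g' < -1) :
    ∃ μ δ, 1 < μ ∧ 0 < δ ∧ FlipsAndExpands g x0 μ δ ∧ Icc (x0 - δ) (x0 + δ) ⊆ Icc a b := by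
  have hev := hg.eventually_flipsAndExpands hfix (μ := (1 - g') / 2) (by linarith)
  obtain ⟨δ₁, hδ₁, hδ₁pos⟩ := (hev.and self_mem_nhdsWithin).exists
  have hx0' := hδ₁.mem_Ioo (by linarith) hδ₁pos hab hmaps hx0
  obtain ⟨δ, hδ, hδI⟩ := (hev.and (Ioo_mem_nhdsGT
    (lt_min (sub_pos.2 hx0'.1) (sub_pos.2 hx0'.2)))).exists
  refine ⟨_, δ, by linarith, hδI.1, hδ, Icc_subset_Icc ?_ ?_⟩
  · linarith [min_le_left (x0 - a) (b - x0), hδI.2]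
  · linarith [min_le_right (x0 - a) (b - x0), hδI.2]

namespace IsHomoclinicOrbit

variable {g : ℝ → ℝ} {x0 : ℝ} {z : ℕ → ℝ}

theorem iterate_apply_s4 (hz : IsHomoclinicOrbit g x0 z) {i j : ℕ} (hij : i ≤ j) :
    g^[j - i] (z j) = z i := by
  obtain ⟨k, rfl⟩ := Nat.exists_eq_add_of_le hij
  rw [Nat.add_sub_cancel_left]
  induction k with
  | zero => rfl
  | succ k ih => rw [iterate_succ_apply, ← add_assoc, hz.2.1, ih (by omega)]

theorem eventually_ne (hz : IsHomoclinicOrbit g x0 z) (hfix : g x0 = x0) :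
    ∀ᶠ k in atTop, z k ≠ x0 := by
  obtain ⟨K, -, hK⟩ := hz.2.2.1
  filter_upwards [eventually_ge_atTop K] with k hk hzk
  exact hK (by rw [← hz.iterate_apply_s4 hk, hzk, iterate_fixed hfix])

end IsHomoclinicOrbit

theorem FlipsAndExpands.exists_mem_periodicPts_near_homoclinicOrbit {g : ℝ → ℝ}
    {a b x0 μ δ ε : ℝ} (h : FlipsAndExpands g x0 μ δ) (hμ : 1 < μ) (hδ : 0 < δ)
    (hg : ContinuousOn g (Icc a b)) (hmaps : MapsTo g (Icc a b) (Icc a b))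
    (hnc : ∀ u v : ℝ, u < v → Icc u v ⊆ Icc a b → ∃ s ∈ Icc u v, ∃ t ∈ Icc u v, g s ≠ g t)
    (hB : Icc (x0 - δ) (x0 + δ) ⊆ Icc a b) {z : ℕ → ℝ} (hz : IsHomoclinicOrbit g x0 z)
    (K : ℕ) (hε : 0 < ε) : ∃ q ∈ Icc a b, q ∈ periodicPts g ∧ q ≠ x0 ∧ dist q (z K) < ε := by
  have hfix := h.isFixedPt hδ.le
  obtain ⟨j, hjK, hjx0, hjδ⟩ : ∃ j, K < j ∧ z j ≠ x0 ∧ dist (z j) x0 < δ / 2 :=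
    ((eventually_gt_atTop K).and ((hz.eventually_ne hfix).and
      (hz.2.2.2.eventually (Metric.ball_mem_nhds x0 (half_pos hδ))))).exists
  rw [Real.dist_eq, abs_lt] at hjδ
  obtain ⟨r₀, hr₀, hcont⟩ := Metric.continuousWithinAt_iff.1
    ((hg.iterate hmaps (j - K)).continuousWithinAt
      (hB (show z j ∈ _ from ⟨by linarith, by linarith⟩))) ε hε
  set r := min (r₀ / 2) (|z j - x0| / 2)
  have hr : 0 < r := lt_min (by positivity) (by positivity [sub_ne_zero.2 hjx0])
  have hrr₀ : r ≤ r₀ / 2 := min_le_left _ _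
  have hrz : r ≤ |z j - x0| / 2 := min_le_right _ _
  have hW : Icc (z j - r) (z j + r) ⊆ Icc x0 (x0 + δ) ∨
      Icc (z j - r) (z j + r) ⊆ Icc (x0 - δ) x0 := by
    rcases hjx0.lt_or_gt with hlt | hgt
    · rw [abs_of_neg (sub_neg.2 hlt)] at hrz
      exact Or.inr (Icc_subset_Icc (by linarith) (by linarith))
    · rw [abs_of_pos (sub_pos.2 hgt)] at hrz
      exact Or.inl (Icc_subset_Icc (by linarith) (by linarith))
  have hx0W : x0 ∉ Icc (z j - r) (z j + r) := fun hx => by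
    have : |z j - x0| ≤ r := abs_le.2 ⟨by linarith [hx.2], by linarith [hx.1]⟩
    linarith [abs_pos.2 (sub_ne_zero.2 hjx0)]
  have hzj : x0 ∈ g^[j] '' Icc (z j - r) (z j + r) :=
    ⟨z j, ⟨by linarith, by linarith⟩, by simpa [hz.1] using hz.iterate_apply_s4 (Nat.zero_le j)⟩
  obtain ⟨p, hp, hper⟩ :=
    h.exists_mem_periodicPts hμ hδ.le hg hmaps hnc hB (by linarith) hW (by omega) hzj
  have hpI : p ∈ Icc a b := hB (subset_Icc_of_subset_side hδ.le hW hp)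
  obtain ⟨n, hn, hpn⟩ := hper
  refine ⟨g^[j - K] p, hmaps.iterate _ hpI, mk_mem_periodicPts hn (hpn.apply_iterate _),
    fun hq => hx0W (hpn.eq_of_iterate_eq_isFixedPt hn hfix hq ▸ hp), ?_⟩
  rw [← hz.iterate_apply_s4 hjK.le]
  refine hcont hpI ?_
  rw [Real.dist_eq, abs_lt]
  constructor <;> linarith [hp.1, hp.2]

theorem eventually_iterate_ne_of_tendsto {ι : Type*} {l : Filter ι} [l.NeBot] {g : ℝ → ℝ}
    {g' a b x0 y : ℝ} {K m : ℕ} {q : ι → ℝ} (hg : ContinuousOn g (Icc a b))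
    (hmaps : MapsTo g (Icc a b) (Icc a b)) (hderiv : HasDerivAt g g' x0) (hfix : g x0 = x0)
    (hg' : 1 < |g'|) (hy : g^[K] y = x0) (hqI : ∀ j, q j ∈ Icc a b) (hqx0 : ∀ j, q j ≠ x0)
    (hq : Tendsto q l (𝓝 y)) (hm : 0 < m) : ∀ᶠ j in l, g^[m] (q j) ≠ q j := by
  by_cases hym : g^[m] y = y
  · obtain rfl : y = x0 := IsPeriodicPt.eq_of_iterate_eq_isFixedPt hym hm hfix hy
    exact (tendsto_nhdsWithin_iff.2 ⟨hq, .of_forall hqx0⟩).eventually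
      (hderiv.eventually_iterate_ne hfix hg' hm)
  · have hyI : y ∈ Icc a b := isClosed_Icc.mem_of_tendsto hq (.of_forall hqI)
    have hlim : Tendsto (fun j => g^[m] (q j)) l (𝓝 (g^[m] y)) :=
      ((hg.iterate hmaps m).continuousWithinAt hyI).tendsto.comp
        (tendsto_nhdsWithin_iff.2 ⟨hq, .of_forall hqI⟩)
    exact ((hlim.sub hq).eventually_ne (sub_ne_zero.2 hym)).mono
      fun j hj heq => hj (sub_eq_zero.2 heq)

theorem periodic_points_accumulate_on_homoclinic_orbit_general
    (a b : ℝ) (hab : a < b) (g : ℝ → ℝ)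
    (hmaps : Set.MapsTo g (Set.Icc a b) (Set.Icc a b))
    (hC2 : ContDiffOn ℝ 2 g (Set.Icc a b))
    (hnc : ∀ u v : ℝ, u < v → Set.Icc u v ⊆ Set.Icc a b →
      ∃ s ∈ Set.Icc u v, ∃ t ∈ Set.Icc u v, g s ≠ g t)
    (x0 : ℝ) (hx0I : x0 ∈ Set.Icc a b) (hfix : g x0 = x0) (hder : deriv g x0 < -1)
    (z : ℕ → ℝ) (hhom : IsHomoclinicOrbit g x0 z) :
    ∀ K : ℕ, ∃ p : ℕ → ℝ,
      (∀ j : ℕ, IsPeriodic g (p j)) ∧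
      Filter.Tendsto p Filter.atTop (nhds (z K)) ∧
      Filter.Tendsto (fun j => Function.minimalPeriod g (p j)) Filter.atTop Filter.atTop := by
  intro K
  have hg : ContinuousOn g (Icc a b) := hC2.continuousOn
  have hderiv : HasDerivAt g (deriv g x0) x0 :=
    (differentiableAt_of_deriv_ne_zero (by linarith)).hasDerivAt
  obtain ⟨μ, δ, hμ, hδ, hflip, hB⟩ := exists_flipsAndExpands hab hmaps hx0I hderiv hfix hder
  choose q hqI hqper hqx0 hqdist using fun j : ℕ =>
    hflip.exists_mem_periodicPts_near_homoclinicOrbit hμ hδ hg hmaps hnc hB hhom K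
      (Nat.one_div_pos_of_nat (n := j))
  have hq : Tendsto q atTop (𝓝 (z K)) :=
    tendsto_iff_dist_tendsto_zero.2 (squeeze_zero (fun _ => dist_nonneg)
      (fun j => (hqdist j).le) tendsto_one_div_add_atTop_nhds_zero_nat)
  have hzK : g^[K] (z K) = x0 := by simpa [hhom.1] using hhom.iterate_apply_s4 (Nat.zero_le K)
  refine ⟨q, hqper, hq, tendsto_minimalPeriod_atTop hqper fun m hm => ?_⟩
  exact eventually_iterate_ne_of_tendsto hg hmaps hderiv hfix
    (by rw [abs_of_neg (by linarith)]; linarith) hzK hqI hqx0 hq hm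

/-- every point of a homoclinic orbit (negative eigenvalue case) is a limit of
periodic points whose least periods tend to infinity. -/
theorem periodic_points_accumulate_on_homoclinic_orbit
    (a b : ℝ) (hab : a < b) (g : ℝ → ℝ)
    (hmaps : Set.MapsTo g (Set.Icc a b) (Set.Icc a b))
    (hC2 : ContDiffOn ℝ 2 g (Set.Icc a b))
    (hnc : ∀ u v : ℝ, u < v → Set.Icc u v ⊆ Set.Icc a b →
      ∃ s ∈ Set.Icc u v, ∃ t ∈ Set.Icc u v, g s ≠ g t)
    (x0 : ℝ) (hx0I : x0 ∈ Set.Icc a b) (hfix : g x0 = x0) (hder : deriv g x0 < -1)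
    (z : ℕ → ℝ) (hhom : IsHomoclinicOrbit g x0 z)
    (hcrit : ∀ k l : ℕ, deriv g (z k) = 0 → deriv g (z l) = 0 → z k = z l) :
    ∀ K : ℕ, ∃ p : ℕ → ℝ,
      (∀ j : ℕ, IsPeriodic g (p j)) ∧
      Filter.Tendsto p Filter.atTop (nhds (z K)) ∧
      Filter.Tendsto (fun j => Function.minimalPeriod g (p j)) Filter.atTop Filter.atTop :=
  periodic_points_accumulate_on_homoclinic_orbit_general a b hab g hmaps hC2 hnc x0 hx0I hfix hder z
    hhom
end

section
/- Suppose every periodic orbit of f₀ is hyperbolic, x₀ is a repelling fixed point of f₀ with f₀'(x₀) > 1, and w = z_{−L} is a homoclinic tangency point on a homoclinic orbit (z_{−k}) to x₀ containing no critical point of f₀ other than w. If w ∈ U_right ∩ U_left, then (w, λ₀) is not a chain explosion point. -/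
open Set Metric Filter Function Topology

/-!
Because `f₀^L w = x₀` and `f₀` is nowhere locally constant, every nondegenerate interval at `w`
is mapped by `f₀^L` onto a nondegenerate interval at `x₀`. That interval contains a point
`q ≠ x₀` whose orbit leaves `[x₀ - δ, x₀ + δ]` on the side of `q`, so its further images cover
the local branch of the unstable manifold on that side; as `w` lies on both branches, they
contain `w`. Hence there are points `t` arbitrarily close to `w`, between `w` and `x₀`, with
`f₀^N t = w` and `f₀^N w = x₀`. Then `f₀^N - id` changes sign between `t` and `w`, and by
continuity in the parameter so does `f_λ^N - id` for every `λ` near `λ₀`, on both sides of `λ₀`: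
each such `f_λ` has a periodic, hence chain recurrent, point near `w`.
-/

section Iterates

variable {α : Type*} [TopologicalSpace α] {g : α → α} {s : Set α}

theorem isFixedPt_of_tendsto_iterate_of_continuousOn [T2Space α] (hs : IsClosed s)
    (hg : ContinuousOn g s) (hm : MapsTo g s s) {x y : α} (hx : x ∈ s)
    (hy : Tendsto (fun n => g^[n] x) atTop (𝓝 y)) : IsFixedPt g y := by
  have horbit : ∀ᶠ n in atTop, g^[n] x ∈ s := Eventually.of_forall fun n => hm.iterate n hx
  refine tendsto_nhds_unique ((tendsto_add_atTop_iff_nat 1).1 ?_) hy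
  simp only [iterate_succ' g]
  exact (hg y (hs.mem_of_tendsto hy horbit)).tendsto.comp (tendsto_nhdsWithin_iff.2 ⟨hy, horbit⟩)

theorem exists_iterate_lt_of_map_lt_self [ConditionallyCompleteLinearOrder α] [OrderTopology α]
    (hs : IsClosed s) (hg : ContinuousOn g s) (hm : MapsTo g s s) {m q : α} (hq : q ∈ s)
    (hlt : ∀ x ∈ s, m ≤ x → x ≤ q → g x < x) : ∃ n, g^[n] q < m := by
  by_contra! hstay
  have hle_q : ∀ n, g^[n] q ≤ q := by
    intro n
    induction n with
    | zero => exact le_rfl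
    | succ n ih =>
      rw [iterate_succ_apply']
      exact (hlt _ (hm.iterate n hq) (hstay n) ih).le.trans ih
  have hanti : Antitone fun n => g^[n] q := antitone_nat_of_succ_le fun n => by
    rw [iterate_succ_apply']
    exact (hlt _ (hm.iterate n hq) (hstay n) (hle_q n)).le
  have hbdd : BddBelow (range fun n => g^[n] q) := ⟨m, forall_mem_range.2 hstay⟩
  set l := ⨅ n, g^[n] q
  have hl : Tendsto (fun n => g^[n] q) atTop (𝓝 l) := tendsto_atTop_ciInf hanti hbdd
  have hls : l ∈ s := hs.mem_of_tendsto hl (Eventually.of_forall fun n => hm.iterate n hq)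
  have hfix : g l = l := isFixedPt_of_tendsto_iterate_of_continuousOn hs hg hm hq hl
  exact (hlt l hls (le_ciInf hstay) (ciInf_le hbdd 0)).ne hfix

end Iterates

theorem iterate_apply_backward_orbit {α : Type*} {g : α → α} {z : ℕ → α}
    (hz : ∀ k, g (z (k + 1)) = z k) : ∀ k, g^[k] (z k) = z 0
  | 0 => rfl
  | k + 1 => by rw [iterate_succ_apply, hz, iterate_apply_backward_orbit hz k]

theorem continuousOn_iterate_uncurry {P X : Type*} [TopologicalSpace P] [TopologicalSpace X]
    {f : P → X → X} {S : Set P} {I : Set X}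
    (hf : ContinuousOn (fun q : P × X => f q.1 q.2) (S ×ˢ I)) (hm : ∀ p ∈ S, MapsTo (f p) I I) :
    ∀ n, ContinuousOn (fun q : P × X => (f q.1)^[n] q.2) (S ×ˢ I)
  | 0 => continuousOn_snd
  | n + 1 => by
    simp only [iterate_succ_apply']
    refine hf.comp (continuousOn_fst.prodMk (continuousOn_iterate_uncurry hf hm n)) ?_
    exact fun q hq => ⟨hq.1, (hm q.1 hq.1).iterate n hq.2⟩

theorem exists_ne_mem_uIcc_uIcc_subset_ball {w x ρ : ℝ} (hwx : w ≠ x) (hρ : 0 < ρ) :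
    ∃ p ∈ uIcc w x, p ≠ w ∧ uIcc w p ⊆ ball w ρ := by
  have hlim : Tendsto (AffineMap.lineMap w x : ℝ → ℝ) (𝓝[>] 0) (𝓝 w) := by
    simpa using (AffineMap.lineMap_continuous.tendsto (0 : ℝ)).mono_left nhdsWithin_le_nhds
  obtain ⟨r, hrρ, hr⟩ :=
    ((hlim.eventually (ball_mem_nhds w hρ)).and (Ioo_mem_nhdsGT one_pos)).exists
  refine ⟨AffineMap.lineMap w x r, ?_, ?_,
    (convex_ball w ρ).ordConnected.uIcc_subset (mem_ball_self hρ) hrρ⟩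
  · rw [← segment_eq_uIcc, segment_eq_image_lineMap]
    exact mem_image_of_mem _ ⟨hr.1.le, hr.2.le⟩
  · simpa [AffineMap.lineMap_eq_left_iff, hwx] using hr.1.ne'

theorem mul_neg_of_mem_uIcc_of_ne {t w x : ℝ} (ht : t ∈ uIcc w x) (htw : t ≠ w) :
    (w - t) * (x - w) < 0 := by
  rcases mem_uIcc.1 ht with ⟨h1, h2⟩ | ⟨h1, h2⟩
  · have hwt := h1.lt_of_ne htw.symm
    exact mul_neg_of_neg_of_pos (sub_neg.2 hwt) (by linarith)
  · have htw := h2.lt_of_ne htw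
    exact mul_neg_of_pos_of_neg (sub_pos.2 htw) (by linarith)

section RealLine

variable {g : ℝ → ℝ} {a b x0 δ w : ℝ}

theorem mem_Icc_of_mem_URight_inter_ULeft (hab : a < b) (hm : MapsTo g (Icc a b) (Icc a b))
    (hx0 : x0 ∈ Icc a b) (hlt : ∀ x, x0 - δ ≤ x → x < x0 → g x < x)
    (hgt : ∀ x, x0 < x → x ≤ x0 + δ → x < g x) (hw : w ∈ URight g x0 δ ∩ ULeft g x0 δ) :
    w ∈ Icc a b := by
  rcases le_or_gt a (x0 - δ) with ha | ha
  · obtain ⟨n, u, hu, rfl⟩ := mem_iUnion.1 hw.2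
    exact hm.iterate n ⟨ha.trans hu.1, hu.2.trans hx0.2⟩
  · have hx0a : x0 = a := by
      refine le_antisymm (not_lt.1 fun hax => ?_) hx0.1
      exact (hlt a ha.le hax).not_ge (hm ⟨le_rfl, hab.le⟩).1
    have hb : x0 + δ ≤ b := not_lt.1 fun hb =>
      (hgt b (hx0a ▸ hab) hb.le).not_ge (hm ⟨hab.le, le_rfl⟩).2
    obtain ⟨n, u, hu, rfl⟩ := mem_iUnion.1 hw.1
    exact hm.iterate n ⟨hx0.1.trans hu.1, hu.2.trans hb⟩

variable (hg : ContinuousOn g (Icc a b)) (hm : MapsTo g (Icc a b) (Icc a b))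
include hg hm

theorem nontrivial_image_iterate
    (hnc : ∀ u v, u < v → Icc u v ⊆ Icc a b → ∃ s ∈ Icc u v, ∃ t ∈ Icc u v, g s ≠ g t) :
    ∀ n {J : Set ℝ}, J ⊆ Icc a b → IsPreconnected J → J.Nontrivial → (g^[n] '' J).Nontrivial
  | 0, J, _, _, hJ => by rwa [iterate_zero, image_id]
  | n + 1, J, hJI, hJc, hJ => by
    rw [iterate_succ, image_comp]
    refine nontrivial_image_iterate hnc n ((hm.mono_left hJI).image_subset)
      (hJc.image g (hg.mono hJI)) ?_
    obtain ⟨u, hu, v, hv, huv⟩ := hJ.exists_lt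
    have huvJ := hJc.Icc_subset hu hv
    obtain ⟨s, hs, t, ht, hst⟩ := hnc u v huv (huvJ.trans hJI)
    exact ⟨g s, mem_image_of_mem g (huvJ hs), g t, mem_image_of_mem g (huvJ ht), hst⟩

variable (hx0 : x0 ∈ Icc a b) (hfix : g x0 = x0)
include hx0 hfix

theorem uIcc_iterate_subset_image_iterate {q : ℝ} (hq : q ∈ Icc a b) (n : ℕ) :
    uIcc (g^[n] q) x0 ⊆ g^[n] '' uIcc q x0 := by
  have := intermediate_value_uIcc ((hg.iterate hm n).mono (ordConnected_Icc.uIcc_subset hq hx0))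
  rwa [iterate_fixed hfix] at this

variable (hlt : ∀ x, x0 - δ ≤ x → x < x0 → g x < x) (hgt : ∀ x, x0 < x → x ≤ x0 + δ → x < g x)
  (hw : w ∈ URight g x0 δ ∩ ULeft g x0 δ)
include hlt hgt hw

theorem exists_mem_image_iterate_uIcc {q : ℝ} (hq : q ∈ Icc a b) (hqx : q ≠ x0) :
    ∃ n, w ∈ g^[n] '' uIcc q x0 := by
  have hreach : ∀ j, ∀ u ∈ uIcc (g^[j] q) x0, ∀ m, g^[m] u = w → ∃ n, w ∈ g^[n] '' uIcc q x0 := by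
    intro j u hu m hmu
    obtain ⟨s, hs, rfl⟩ := uIcc_iterate_subset_image_iterate hg hm hx0 hfix hq j hu
    exact ⟨m + j, s, hs, by rw [iterate_add_apply, hmu]⟩
  rcases hqx.lt_or_gt with hqx | hqx
  · obtain ⟨j, hj⟩ := exists_iterate_lt_of_map_lt_self isClosed_Icc hg hm hq
      fun x _ h1 h2 => hlt x h1 (h2.trans_lt hqx)
    obtain ⟨m, u, hu, hmu⟩ := mem_iUnion.1 hw.2
    exact hreach j u (Icc_subset_uIcc ⟨hj.le.trans hu.1, hu.2⟩) m hmu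
  · -- the previous case, read in the reversed order
    obtain ⟨j, hj⟩ := exists_iterate_lt_of_map_lt_self (α := ℝᵒᵈ) (g := g)
      (s := (Icc a b : Set ℝ)) (m := x0 + δ) (isClosed_Icc : IsClosed (Icc a b)) hg hm hq
      fun x _ h1 h2 => hgt x (hqx.trans_le h2) h1
    obtain ⟨m, u, hu, hmu⟩ := mem_iUnion.1 hw.1
    exact hreach j u (Icc_subset_uIcc' ⟨hu.1, hu.2.trans hj.le⟩) m hmu

variable (hnc : ∀ u v, u < v → Icc u v ⊆ Icc a b → ∃ s ∈ Icc u v, ∃ t ∈ Icc u v, g s ≠ g t)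
  {L : ℕ} (hL : g^[L] w = x0)
include hnc hL

theorem exists_iterate_eq_of_mem {J : Set ℝ} (hJI : J ⊆ Icc a b) (hJc : IsPreconnected J)
    (hJ : J.Nontrivial) (hwJ : w ∈ J) : ∃ N ≥ L, ∃ t ∈ J, g^[N] t = w := by
  have hK : IsPreconnected (g^[L] '' J) := hJc.image _ ((hg.iterate hm L).mono hJI)
  obtain ⟨q, ⟨r, hrJ, rfl⟩, hqx⟩ := (nontrivial_image_iterate hg hm hnc L hJI hJc hJ).exists_ne x0
  obtain ⟨n, s, hs, hsw⟩ := exists_mem_image_iterate_uIcc hg hm hx0 hfix hlt hgt hw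
    (hm.iterate L (hJI hrJ)) hqx
  obtain ⟨t, htJ, rfl⟩ := hK.ordConnected.uIcc_subset (mem_image_of_mem _ hrJ) ⟨w, hwJ, hL⟩ hs
  exact ⟨n + L, le_add_self, t, htJ, by rw [iterate_add_apply, hsw]⟩

theorem exists_iterate_eq_near (hwI : w ∈ Icc a b) (hwx : w ≠ x0) {ρ : ℝ} (hρ : 0 < ρ) :
    ∃ N, ∃ t ∈ uIcc w x0, t ≠ w ∧ dist t w < ρ ∧ g^[N] t = w ∧ g^[N] w = x0 := by
  obtain ⟨p, hp, hpw, hpρ⟩ := exists_ne_mem_uIcc_uIcc_subset_ball hwx hρ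
  have hJ : uIcc w p ⊆ uIcc w x0 := uIcc_subset_uIcc_left hp
  obtain ⟨N, hLN, t, htJ, htw⟩ := exists_iterate_eq_of_mem hg hm hx0 hfix hlt hgt hw hnc hL
    (hJ.trans (ordConnected_Icc.uIcc_subset hwI hx0)) isPreconnected_uIcc
    ⟨w, left_mem_uIcc, p, right_mem_uIcc, hpw.symm⟩ left_mem_uIcc
  have hwN : g^[N] w = x0 := by
    obtain ⟨k, rfl⟩ := Nat.exists_eq_add_of_le hLN
    rw [add_comm, iterate_add_apply, hL, iterate_fixed hfix]
  have htw' : t ≠ w := by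
    rintro rfl
    exact hwx (htw.symm.trans hwN)
  exact ⟨N, t, hJ htJ, htw', hpρ htJ, htw, hwN⟩

end RealLine

theorem eventually_exists_iterate_eq_self {f : ℝ → ℝ → ℝ} {S I : Set ℝ} [I.OrdConnected]
    (hf : ContinuousOn (fun q : ℝ × ℝ => f q.1 q.2) (S ×ˢ I))
    (hm : ∀ lam ∈ S, MapsTo (f lam) I I) {lam0 : ℝ} (hS : S ∈ 𝓝 lam0) {N : ℕ} {t w : ℝ}
    (ht : t ∈ I) (hw : w ∈ I) (hsign : ((f lam0)^[N] t - t) * ((f lam0)^[N] w - w) < 0) :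
    ∀ᶠ lam in 𝓝 lam0, ∃ y ∈ uIcc t w, (f lam)^[N] y = y := by
  have hF := continuousOn_iterate_uncurry hf hm N
  have hcont : ∀ x ∈ I, ContinuousAt (fun lam => (f lam)^[N] x) lam0 := fun x hx =>
    (hF.uncurry_right (f := fun lam x => (f lam)^[N] x) x hx).continuousAt hS
  have hprod : ContinuousAt (fun lam => ((f lam)^[N] t - t) * ((f lam)^[N] w - w)) lam0 :=
    ((hcont t ht).sub continuousAt_const).mul ((hcont w hw).sub continuousAt_const)
  filter_upwards [hprod.eventually_lt continuousAt_const hsign, hS] with lam hlam hlamS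
  have hψ : ContinuousOn (fun x => (f lam)^[N] x - x) (uIcc t w) :=
    ((hF.uncurry_left (f := fun lam x => (f lam)^[N] x) lam hlamS).mono
      (OrdConnected.uIcc_subset ‹_› ht hw)).sub continuousOn_id
  have h0 : (0 : ℝ) ∈ uIcc ((f lam)^[N] t - t) ((f lam)^[N] w - w) := by
    rcases mul_neg_iff.1 hlam with h | h
    · exact mem_uIcc.2 (Or.inr ⟨h.2.le, h.1.le⟩)
    · exact mem_uIcc.2 (Or.inl ⟨h.1.le, h.2.le⟩)
  obtain ⟨y, hy, hy0⟩ := intermediate_value_uIcc hψ h0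
  exact ⟨y, hy, sub_eq_zero.1 hy0⟩

theorem chainRecurrent_of_iterate_eq {g : ℝ → ℝ} {y : ℝ} {N : ℕ} (hN : N ≠ 0)
    (hy : g^[N] y = y) : ChainRecurrent g y := by
  intro ε hε
  refine ⟨N, Nat.one_le_iff_ne_zero.2 hN, fun n => g^[n] y, rfl, hy, fun n hn _ => ?_⟩
  obtain ⟨k, rfl⟩ := Nat.exists_eq_add_of_le' hn
  simpa [iterate_succ_apply'] using hε

theorem not_chainExplosionPoint_of_eventually {f : ℝ → ℝ → ℝ} {J : Set ℝ} {lam0 x : ℝ}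
    (hJ : J ∈ 𝓝 lam0)
    (h : ∀ ρ > 0, ∀ᶠ lam in 𝓝 lam0, ∃ y ∈ ball x ρ, ChainRecurrent (f lam) y) :
    ¬ ChainExplosionPoint f J lam0 x := by
  rintro ⟨-, ρ, hρ, hside | hside⟩
  · obtain ⟨lam, ⟨⟨y, hy, hcr⟩, hlamJ⟩, hlt⟩ :=
      ((((h ρ hρ).and hJ).filter_mono nhdsWithin_le_nhds).and
        (self_mem_nhdsWithin : Iio lam0 ∈ 𝓝[<] lam0)).exists
    exact hside lam hlamJ hlt y hy hcr
  · obtain ⟨lam, ⟨⟨y, hy, hcr⟩, hlamJ⟩, hgt⟩ :=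
      ((((h ρ hρ).and hJ).filter_mono nhdsWithin_le_nhds).and
        (self_mem_nhdsWithin : Ioi lam0 ∈ 𝓝[>] lam0)).exists
    exact hside lam hlamJ hgt y hy hcr

theorem no_explosion_when_branches_intersect_general
(f : ℝ → ℝ → ℝ) (a b c d : ℝ) (hab : a < b)
    (hmaps : ∀ lam ∈ Set.Ioo c d, Set.MapsTo (f lam) (Set.Icc a b) (Set.Icc a b))
    (hC1 : ContDiffOn ℝ 1 (fun q : ℝ × ℝ => f q.1 q.2) (Set.Ioo c d ×ˢ Set.Icc a b))
    (lam0 : ℝ) (hlam0 : lam0 ∈ Set.Ioo c d)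
    (hnc : ∀ u v : ℝ, u < v → Set.Icc u v ⊆ Set.Icc a b →
      ∃ s ∈ Set.Icc u v, ∃ t ∈ Set.Icc u v, f lam0 s ≠ f lam0 t)
    (x0 : ℝ) (hx0I : x0 ∈ Set.Icc a b)
    (hfix : f lam0 x0 = x0) (hder : 1 < deriv (f lam0) x0)
    (δ : ℝ) (hδ : GoodDelta (f lam0) x0 δ)
    (z : ℕ → ℝ) (hhom : IsHomoclinicOrbit (f lam0) x0 z)
    (L : ℕ) (w : ℝ) (hw : w = z L) (htan : deriv (f lam0) w = 0)
    (hboth : w ∈ URight (f lam0) x0 δ ∩ ULeft (f lam0) x0 δ) :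
    ¬ ChainExplosionPoint f (Set.Ioo c d) lam0 w := by
  obtain ⟨-, -, hlt, hgt⟩ := hδ
  have hf := hC1.continuousOn
  have hJ : Ioo c d ∈ 𝓝 lam0 := Ioo_mem_nhds hlam0.1 hlam0.2
  have hg : ContinuousOn (f lam0) (Icc a b) := hf.uncurry_left lam0 hlam0
  have hgm := hmaps lam0 hlam0
  have hwx : w ≠ x0 := by
    rintro rfl
    linarith
  have hLw : (f lam0)^[L] w = x0 := by rw [hw, iterate_apply_backward_orbit hhom.2.1, hhom.1]
  have hwI := mem_Icc_of_mem_URight_inter_ULeft hab hgm hx0I hlt hgt hboth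
  refine not_chainExplosionPoint_of_eventually hJ fun ρ hρ => ?_
  obtain ⟨N, t, htx, htw, htρ, hNt, hNw⟩ :=
    exists_iterate_eq_near hg hgm hx0I hfix hlt hgt hboth hnc hLw hwI hwx hρ
  have hN : N ≠ 0 := by
    rintro rfl
    exact htw hNt
  have hsign : ((f lam0)^[N] t - t) * ((f lam0)^[N] w - w) < 0 := by
    rw [hNt, hNw]
    exact mul_neg_of_mem_uIcc_of_ne htx htw
  filter_upwards [eventually_exists_iterate_eq_self hf hmaps hJ
    (ordConnected_Icc.uIcc_subset hwI hx0I htx) hwI hsign] with lam ⟨y, hy, hyN⟩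
  exact ⟨y, (convex_ball w ρ).ordConnected.uIcc_subset htρ (mem_ball_self hρ) hy,
    chainRecurrent_of_iterate_eq hN hyN⟩

/-- no explosion when the tangency point lies in both branches of the
unstable manifold. -/
theorem no_explosion_when_branches_intersect
(f : ℝ → ℝ → ℝ) (a b c d : ℝ) (hab : a < b) (hcd : c < d)
    (hmaps : ∀ lam ∈ Set.Ioo c d, Set.MapsTo (f lam) (Set.Icc a b) (Set.Icc a b))
    (hC1 : ContDiffOn ℝ 1 (fun q : ℝ × ℝ => f q.1 q.2) (Set.Ioo c d ×ˢ Set.Icc a b))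
    (hC2 : ∀ lam ∈ Set.Ioo c d, ContDiffOn ℝ 2 (f lam) (Set.Icc a b))
    (lam0 : ℝ) (hlam0 : lam0 ∈ Set.Ioo c d)
    (hnc : ∀ u v : ℝ, u < v → Set.Icc u v ⊆ Set.Icc a b →
      ∃ s ∈ Set.Icc u v, ∃ t ∈ Set.Icc u v, f lam0 s ≠ f lam0 t)
    (hhyp : AllPeriodicHyperbolic (f lam0))
    (x0 : ℝ) (hx0I : x0 ∈ Set.Icc a b)
    (hfix : f lam0 x0 = x0) (hder : 1 < deriv (f lam0) x0)
    (δ : ℝ) (hδ : GoodDelta (f lam0) x0 δ)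
    (z : ℕ → ℝ) (hhom : IsHomoclinicOrbit (f lam0) x0 z)
    (L : ℕ) (hL : 1 ≤ L) (w : ℝ) (hw : w = z L) (htan : deriv (f lam0) w = 0)
    (hcrit : ∀ k : ℕ, deriv (f lam0) (z k) = 0 → z k = w)
    (hboth : w ∈ URight (f lam0) x0 δ ∩ ULeft (f lam0) x0 δ) :
    ¬ ChainExplosionPoint f (Set.Ioo c d) lam0 w :=
  no_explosion_when_branches_intersect_general f a b c d hab hmaps hC1 lam0 hlam0 hnc x0 hx0I hfix
    hder δ hδ z hhom L w hw htan hboth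
end
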